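/- arXiv:1606.04687 — 3 statements merged into one kernel-verified Lean document; each statement's English description precedes it below -/
import Mathlib

section
/- For continuous maps f, g : 𝕊^N → 𝕊^N with deg f ≠ deg g, one has sup_{x ∈ 𝕊^N} |f(x) - g(x)| = 2, i.e. there exists x with g(x) = -f(x). -/
/-!
If `g x ≠ -f x` for every `x`, the segment from `f x` to `g x` avoids the origin, so normalising
the straight-line homotopy from `f` to `g` gives a homotopy inside the sphere, and `f`, `g` would
have the same degree. Hence `g x = -f x` for some `x`, where `‖f x - g x‖ = 2` attains the bound
`‖f x‖ + ‖g x‖ = 2`.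
-/

/-- The unit sphere `𝕊^N ⊂ ℝ^{N+1}`. -/
abbrev Sph (N : ℕ) := Metric.sphere (0 : EuclideanSpace ℝ (Fin (N + 1))) 1

open Metric

section

variable {E : Type*} [NormedAddCommGroup E] [NormedSpace ℝ E]

theorem lineMap_ne_zero_of_norm_eq_of_ne_neg {u v : E} (hnorm : ‖u‖ = ‖v‖) (huv : v ≠ -u)
    (t : ℝ) : AffineMap.lineMap u v t ≠ 0 := by
  intro h0
  rw [AffineMap.lineMap_apply_module] at h0
  have hu : u ≠ 0 := by
    rintro rfl
    exact huv (by simpa using hnorm.symm)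
  -- `(1 - t) • u = -(t • v)` with `‖u‖ = ‖v‖ ≠ 0` forces `t = 1 / 2`, i.e. `u + v = 0`.
  have hcoeff : |1 - t| = |t| := by
    have := congrArg norm (eq_neg_of_add_eq_zero_left h0)
    rw [norm_neg, norm_smul, norm_smul, ← hnorm, Real.norm_eq_abs, Real.norm_eq_abs] at this
    exact mul_right_cancel₀ (norm_ne_zero_iff.mpr hu) this
  have ht : t = 1 / 2 := by
    rcases abs_eq_abs.mp hcoeff with h | h <;> linarith
  subst ht
  refine huv (eq_neg_of_add_eq_zero_right ?_)
  linear_combination (norm := module) (2 : ℝ) • h0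

theorem ContinuousMap.homotopic_of_forall_ne_neg {X : Type*} [TopologicalSpace X]
    {f g : C(X, sphere (0 : E) 1)} (hfg : ∀ x, (g x : E) ≠ -f x) : f.Homotopic g := by
  let ι : C(sphere (0 : E) 1, E) := ⟨Subtype.val, continuous_subtype_val⟩
  let H := Homotopy.affine (ι.comp f) (ι.comp g)
  have hH : ∀ p, H p ≠ 0 := fun p =>
    lineMap_ne_zero_of_norm_eq_of_ne_neg (by simp) (hfg p.2) _
  refine ⟨{
    toFun p := ⟨‖H p‖⁻¹ • H p, ?_⟩
    continuous_toFun := ?_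
    map_zero_left x := ?_
    map_one_left x := ?_ }⟩
  · simpa using norm_smul_inv_norm (𝕜 := ℝ) (hH p)
  · exact ((H.continuous.norm.inv₀ fun p => norm_ne_zero_iff.mpr (hH p)).smul
      H.continuous).subtype_mk _
  · ext1; simp [H, ι]
  · ext1; simp [H, ι]

theorem iSup_norm_sub_eq_two_of_eq_neg {ι : Type*} (u v : ι → sphere (0 : E) 1) {i₀ : ι}
    (h : (v i₀ : E) = -u i₀) : ⨆ i, ‖(u i : E) - v i‖ = 2 := by
  have hle : ∀ i, ‖(u i : E) - v i‖ ≤ 2 := fun i => by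
    simpa [one_add_one_eq_two] using norm_sub_le (u i : E) (v i)
  have heq : ‖(u i₀ : E) - v i₀‖ = 2 := by
    rw [h, sub_neg_eq_add, ← two_smul ℝ, norm_smul]
    simp
  have : Nonempty ι := ⟨i₀⟩
  exact le_antisymm (ciSup_le hle) (le_ciSup_of_le ⟨2, Set.forall_mem_range.mpr hle⟩ i₀ heq.ge)

end

/-- For continuous maps `f, g : 𝕊^N → 𝕊^N` with `deg f ≠ deg g`, one has
`sup_x |f x - g x| = 2`, i.e. there exists `x` with `g x = -f x`.
The Brouwer degree is taken as any homotopy-invariant integer-valued function `deg`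
on continuous self-maps of the sphere. -/
theorem stmt1 (N : ℕ) (deg : C(Sph N, Sph N) → ℤ)
    (hdeg : ∀ f g : C(Sph N, Sph N), f.Homotopic g → deg f = deg g)
    (f g : C(Sph N, Sph N)) (h : deg f ≠ deg g) :
    (⨆ x : Sph N, ‖(f x : EuclideanSpace ℝ (Fin (N + 1))) - (g x : EuclideanSpace ℝ (Fin (N + 1)))‖) = 2 ∧
    ∃ x : Sph N, (g x : EuclideanSpace ℝ (Fin (N + 1))) = -(f x : EuclideanSpace ℝ (Fin (N + 1))) := by
  obtain ⟨x, hx⟩ : ∃ x, (g x : EuclideanSpace ℝ (Fin (N + 1))) = -f x := by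
    by_contra! hfg
    exact h (hdeg f g (ContinuousMap.homotopic_of_forall_ne_neg hfg))
  exact ⟨iSup_norm_sub_eq_two_of_eq_neg _ _ hx, x, hx⟩
end

section
/- For any integers d₁ ≠ d₂, and any f ∈ C¹(𝕊¹;𝕊¹) with deg f = d₁ and g ∈ C¹(𝕊¹;𝕊¹) with deg g = d₂, one has ∫_{𝕊¹} |f' - g'| ≥ 4|d₁ - d₂|, where the integral is with respect to arclength and f', g' denote the tangential derivatives. -/
open Real

/-- `φ` is a `C¹` phase function representing the map `e^{iθ} ↦ e^{iφ(θ)}` of `𝕊¹` to itself,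
of degree `d` (equivalently, `deg = (1/2π)∫ f ∧ f'` for `f = e^{iφ}`). -/
def HasC1Degree (φ : ℝ → ℝ) (d : ℤ) : Prop :=
  ContDiff ℝ 1 φ ∧ ∀ θ : ℝ, φ (θ + 2 * π) = φ θ + 2 * π * d

/-!
Write `h = φ - ψ`. Rotating `φ' e^{iφ} - ψ' e^{iψ}` by `e^{-i(φ+ψ)/2}` and taking the real part
gives the pointwise bound `|f' - g'| ≥ |h' cos (h / 2)|`. The substitution `u = h θ` turns
`∫ h' |cos (h / 2)|` into the integral of `|cos (u / 2)|` over `d₁ - d₂` of its periods, each of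
which contributes `4`.
-/

lemma abs_sub_mul_cos_half_sub_le_norm (a b x y : ℝ) :
    |(a - b) * Real.cos ((x - y) / 2)| ≤
      ‖(a : ℂ) * Complex.exp (x * Complex.I) - b * Complex.exp (y * Complex.I)‖ := by
  set s := (x - y) / 2
  set m := (x + y) / 2
  set w : ℂ := a * Complex.exp (s * Complex.I) - b * Complex.exp ((-s : ℝ) * Complex.I)
  have hx : (x : ℂ) * Complex.I = m * Complex.I + s * Complex.I := by
    simp only [m, s]; push_cast; ring
  have hy : (y : ℂ) * Complex.I = m * Complex.I + (-s : ℝ) * Complex.I := by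
    simp only [m, s]; push_cast; ring
  have hfactor : (a : ℂ) * Complex.exp (x * Complex.I) - b * Complex.exp (y * Complex.I) =
      Complex.exp (m * Complex.I) * w := by
    rw [hx, hy, Complex.exp_add, Complex.exp_add]; ring
  have hre : w.re = (a - b) * Real.cos s := by
    simp only [w, Complex.sub_re, Complex.re_ofReal_mul, Complex.exp_ofReal_mul_I_re, Real.cos_neg]
    ring
  rw [hfactor, norm_mul, Complex.norm_exp_ofReal_mul_I, one_mul, ← hre]
  exact Complex.abs_re_le_norm w

lemma deriv_cexp_I_mul_ofReal {φ : ℝ → ℝ} {θ : ℝ} (hφ : DifferentiableAt ℝ φ θ) :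
    deriv (fun t : ℝ => Complex.exp (Complex.I * φ t)) θ =
      Complex.I * (deriv φ θ * Complex.exp (φ θ * Complex.I)) := by
  have h := (hφ.hasDerivAt.ofReal_comp.const_mul Complex.I).cexp
  rw [h.deriv]; ring_nf

lemma continuous_deriv_cexp_I_mul_ofReal {φ : ℝ → ℝ} (hφ : ContDiff ℝ 1 φ) :
    Continuous (deriv fun t : ℝ => Complex.exp (Complex.I * φ t)) :=
  ((contDiff_const.mul (Complex.ofRealCLM.contDiff.comp hφ)).cexp).continuous_deriv le_rfl

lemma abs_deriv_sub_mul_cos_le_norm_deriv_cexp_sub {φ ψ : ℝ → ℝ} {θ : ℝ}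
    (hφ : DifferentiableAt ℝ φ θ) (hψ : DifferentiableAt ℝ ψ θ) :
    |(deriv φ θ - deriv ψ θ) * Real.cos ((φ θ - ψ θ) / 2)| ≤
      ‖deriv (fun t : ℝ => Complex.exp (Complex.I * φ t)) θ -
        deriv (fun t : ℝ => Complex.exp (Complex.I * ψ t)) θ‖ := by
  rw [deriv_cexp_I_mul_ofReal hφ, deriv_cexp_I_mul_ofReal hψ, ← mul_sub, norm_mul,
    Complex.norm_I, one_mul]
  exact abs_sub_mul_cos_half_sub_le_norm _ _ _ _

lemma continuous_abs_cos_half : Continuous fun t : ℝ => |Real.cos (t / 2)| := by fun_prop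

lemma periodic_abs_cos_half : Function.Periodic (fun t : ℝ => |Real.cos (t / 2)|) (2 * π) := by
  intro t
  simp only [add_div, mul_div_cancel_left₀ π two_ne_zero, Real.cos_add_pi, abs_neg]

lemma integral_abs_cos_half_neg_pi_pi : ∫ t in -π..π, |Real.cos (t / 2)| = 4 := by
  have hcos : ∀ t ∈ Set.uIcc (-π) π, |Real.cos (t / 2)| = Real.cos (t / 2) := by
    intro t ht
    rw [Set.uIcc_of_le (by linarith [pi_pos])] at ht
    exact abs_of_nonneg (Real.cos_nonneg_of_mem_Icc ⟨by linarith [ht.1], by linarith [ht.2]⟩)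
  rw [intervalIntegral.integral_congr hcos, intervalIntegral.integral_comp_div _ two_ne_zero,
    integral_cos, neg_div, Real.sin_neg, Real.sin_pi_div_two]
  norm_num

lemma integral_abs_cos_half_add_zsmul (a : ℝ) (k : ℤ) :
    ∫ t in a..a + k • (2 * π), |Real.cos (t / 2)| = 4 * k := by
  rw [periodic_abs_cos_half.intervalIntegral_add_zsmul_eq k a
      (fun _ _ => continuous_abs_cos_half.intervalIntegrable _ _),
    periodic_abs_cos_half.intervalIntegral_add_eq a (-π),
    show -π + 2 * π = π by ring, integral_abs_cos_half_neg_pi_pi, zsmul_eq_mul, mul_comm]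

lemma HasC1Degree.apply_two_pi {φ : ℝ → ℝ} {d : ℤ} (hφ : HasC1Degree φ d) :
    φ (2 * π) = φ 0 + d • (2 * π) := by
  simpa [zsmul_eq_mul, mul_comm] using hφ.2 0

theorem stmt2_general (d₁ d₂ : ℤ) (φ ψ : ℝ → ℝ)
    (hφ : HasC1Degree φ d₁) (hψ : HasC1Degree ψ d₂) :
    4 * |(d₁ : ℝ) - (d₂ : ℝ)| ≤
      ∫ θ in (0:ℝ)..(2 * π),
        ‖deriv (fun t : ℝ => Complex.exp (Complex.I * (φ t : ℂ))) θ -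
          deriv (fun t : ℝ => Complex.exp (Complex.I * (ψ t : ℂ))) θ‖ := by
  have hend : φ (2 * π) - ψ (2 * π) = (φ 0 - ψ 0) + (d₁ - d₂) • (2 * π) := by
    rw [hφ.apply_two_pi, hψ.apply_two_pi, sub_zsmul]; abel
  obtain ⟨hφ, -⟩ := hφ
  obtain ⟨hψ, -⟩ := hψ
  have hdφ := hφ.differentiable one_ne_zero
  have hdψ := hψ.differentiable one_ne_zero
  have hφ' := hφ.continuous_deriv le_rfl
  have hψ' := hψ.continuous_deriv le_rfl
  have hsubst : ∫ θ in (0:ℝ)..(2 * π), |Real.cos ((φ θ - ψ θ) / 2)| * (deriv φ θ - deriv ψ θ) =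
      ∫ u in (φ 0 - ψ 0)..(φ (2 * π) - ψ (2 * π)), |Real.cos (u / 2)| :=
    intervalIntegral.integral_comp_mul_deriv (g := fun u => |Real.cos (u / 2)|)
      (fun θ _ => (hdφ θ).hasDerivAt.sub (hdψ θ).hasDerivAt)
      (hφ'.sub hψ').continuousOn continuous_abs_cos_half
  calc 4 * |(d₁ : ℝ) - (d₂ : ℝ)|
      = |∫ θ in (0:ℝ)..(2 * π), |Real.cos ((φ θ - ψ θ) / 2)| * (deriv φ θ - deriv ψ θ)| := by
        rw [hsubst, hend, integral_abs_cos_half_add_zsmul]; push_cast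
        rw [abs_mul, abs_of_pos (four_pos : (0 : ℝ) < 4)]
    _ ≤ ∫ θ in (0:ℝ)..(2 * π), |(deriv φ θ - deriv ψ θ) * Real.cos ((φ θ - ψ θ) / 2)| := by
        refine (intervalIntegral.abs_integral_le_integral_abs (by positivity)).trans_eq ?_
        simp only [abs_mul, abs_abs, mul_comm]
    _ ≤ _ := by
        refine intervalIntegral.integral_mono_on (by positivity)
          (Continuous.intervalIntegrable (by fun_prop) _ _) ?_
          fun θ _ => abs_deriv_sub_mul_cos_le_norm_deriv_cexp_sub (hdφ θ) (hdψ θ)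
        exact ((continuous_deriv_cexp_I_mul_ofReal hφ).sub
          (continuous_deriv_cexp_I_mul_ofReal hψ)).norm.intervalIntegrable _ _

/-- For integers `d₁ ≠ d₂` and `C¹` maps `f = e^{iφ}, g = e^{iψ} : 𝕊¹ → 𝕊¹` of degrees
`d₁, d₂`, one has `∫_{𝕊¹} |f' - g'| ≥ 4 |d₁ - d₂|`. -/
theorem stmt2 (d₁ d₂ : ℤ) (hne : d₁ ≠ d₂) (φ ψ : ℝ → ℝ)
    (hφ : HasC1Degree φ d₁) (hψ : HasC1Degree ψ d₂) :
    4 * |(d₁ : ℝ) - (d₂ : ℝ)| ≤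
      ∫ θ in (0:ℝ)..(2 * π),
        ‖deriv (fun t : ℝ => Complex.exp (Complex.I * (φ t : ℂ))) θ -
          deriv (fun t : ℝ => Complex.exp (Complex.I * (ψ t : ℂ))) θ‖ :=
  stmt2_general d₁ d₂ φ ψ hφ hψ
end

section
/- Let 1 < p < ∞. The function f : ℝ → [0,∞) defined by f(x) = ln(ln(1/|x|)) for 0 < |x| < 1/e and f(x) = 0 for |x| ≥ 1/e belongs to W^{1/p,p}(ℝ), i.e., ∫_ℝ∫_ℝ |f(x)-f(y)|^p/|x-y|² dx dy < ∞. -/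
open Real MeasureTheory

/-- The function `f(x) = ln(ln(1/|x|))` for `0 < |x| < 1/e`, `f(x) = 0` for `|x| ≥ 1/e`. -/
noncomputable def fLogLog (x : ℝ) : ℝ :=
  if x ≠ 0 ∧ |x| < Real.exp (-1) then Real.log (Real.log (1 / |x|)) else 0

/-!
Since `f` is even and `| |x| - |y| | ≤ |x - y|`, the integral over `ℝ²` is at most four times the
one over `(0, ∞)²`. The substitution `x = e^{-s}`, `y = e^{-t}` turns `f` into `g s = log s` for
`s > 1` (and `0` otherwise), and, as `(e^{-s} - e^{-t})² = e^{-s} e^{-t} (2 sinh ((t - s)/2))²`,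
the integral into `∫∫ |g s - g t|^p / (2 sinh ((t - s)/2))² ds dt`.
For `s ≤ t`, `log (t/s) ≤ (t - s)/s` gives `|g t - g s|^p ≤ w(s) (t - s)^p e^{(t - s)/4}` with
`w(s) = s^{-p}` for `s > 1` and `w(s) = e^{s/4}` otherwise (then `g t - g s` vanishes unless
`t > 1`). With `2 sinh (d/2) ≥ (d/2) e^{d/4}` the integrand is dominated by
`(w(s) + w(t)) k(t - s)`, `k(d) = 4 |d|^{p-2} e^{-|d|/4}`, whose integral is `2 ∫ w · ∫ k`; both
factors are finite because `p > 1`.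
-/

open Set
open scoped ENNReal

theorem lintegral_comp_abs (f : ℝ → ℝ≥0∞) : ∫⁻ x, f |x| = 2 * ∫⁻ x in Ioi 0, f x := by
  have hpos : ∫⁻ x in Ioi 0, f |x| = ∫⁻ x in Ioi 0, f x :=
    setLIntegral_congr_fun measurableSet_Ioi fun x hx => by rw [abs_of_pos hx]
  have hneg : ∫⁻ x in Iic 0, f |x| = ∫⁻ x in Ioi 0, f x := by
    rw [← hpos, setLIntegral_congr Ioi_ae_eq_Ici, ← lintegral_indicator measurableSet_Iic,
      ← lintegral_indicator measurableSet_Ici, ← lintegral_neg_eq_self]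
    congr 1 with x
    simp [indicator_apply]
  rw [← lintegral_add_compl _ measurableSet_Ioi, compl_Ioi, hpos, hneg, two_mul, add_comm]

theorem lintegral_Ioi_zero_eq_lintegral_comp_exp_neg (f : ℝ → ℝ≥0∞) :
    ∫⁻ x in Ioi 0, f x = ∫⁻ s, ENNReal.ofReal (exp (-s)) * f (exp (-s)) := by
  have himage : (fun s => exp (-s)) '' univ = Ioi 0 := by
    rw [image_univ, ← Real.range_exp]
    exact (Function.LeftInverse.surjective neg_neg).range_comp exp
  have hderiv (s : ℝ) : HasDerivAt (fun s => exp (-s)) (-exp (-s)) s := by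
    simpa using (hasDerivAt_neg s).exp
  rw [← himage, lintegral_image_eq_lintegral_abs_deriv_mul MeasurableSet.univ
    (fun s _ => (hderiv s).hasDerivWithinAt) (fun s _ t _ h => neg_injective (exp_injective h)),
    Measure.restrict_univ]
  simp [abs_of_pos (exp_pos _)]

theorem lintegral_lintegral_add_mul_comp_sub {G : Type*} [MeasurableSpace G] [AddGroup G]
    [MeasurableAdd G] [MeasurableSub₂ G] {μ : Measure G} [SFinite μ] [μ.IsAddRightInvariant]
    {a k : G → ℝ≥0∞} (ha : Measurable a) (hk : Measurable k) (hk_even : k.Even) :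
    ∫⁻ s, ∫⁻ t, (a s + a t) * k (t - s) ∂μ ∂μ = 2 * (∫⁻ s, a s ∂μ) * ∫⁻ u, k u ∂μ := by
  have hk_sub : Measurable fun z : G × G => k (z.2 - z.1) :=
    hk.comp (measurable_snd.sub measurable_fst)
  have hk_sub_const (s : G) : Measurable fun t => k (t - s) := hk.comp (measurable_sub_const s)
  have hfirst : ∫⁻ s, ∫⁻ t, a s * k (t - s) ∂μ ∂μ = (∫⁻ s, a s ∂μ) * ∫⁻ u, k u ∂μ := by
    calc ∫⁻ s, ∫⁻ t, a s * k (t - s) ∂μ ∂μ = ∫⁻ s, a s * ∫⁻ u, k u ∂μ ∂μ := by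
          refine lintegral_congr fun s => ?_
          rw [lintegral_const_mul _ (hk_sub_const s), lintegral_sub_right_eq_self k s]
      _ = _ := lintegral_mul_const _ ha
  have hsecond : ∫⁻ s, ∫⁻ t, a t * k (t - s) ∂μ ∂μ = (∫⁻ s, a s ∂μ) * ∫⁻ u, k u ∂μ := by
    rw [lintegral_lintegral_swap ((ha.comp measurable_snd).mul hk_sub).aemeasurable, ← hfirst]
    refine lintegral_congr fun t => lintegral_congr fun s => ?_
    rw [← hk_even, neg_sub]
  have hfirst_meas : Measurable fun s => ∫⁻ t, a s * k (t - s) ∂μ :=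
    ((ha.comp measurable_fst).mul hk_sub).lintegral_prod_right'
  calc ∫⁻ s, ∫⁻ t, (a s + a t) * k (t - s) ∂μ ∂μ
      = ∫⁻ s, (∫⁻ t, a s * k (t - s) ∂μ) + ∫⁻ t, a t * k (t - s) ∂μ ∂μ := by
        refine lintegral_congr fun s => ?_
        simp_rw [add_mul]
        exact lintegral_add_left ((hk_sub_const s).const_mul _) _
    _ = 2 * (∫⁻ s, a s ∂μ) * ∫⁻ u, k u ∂μ := by
        rw [lintegral_add_left hfirst_meas, hfirst, hsecond, ← two_mul, mul_assoc]

noncomputable def gagliardoKernel (f : ℝ → ℝ) (p x y : ℝ) : ℝ≥0∞ :=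
  ENNReal.ofReal (|f x - f y| ^ p / |x - y| ^ 2)

theorem gagliardoKernel_le_abs {f : ℝ → ℝ} (hf : f.Even) {p : ℝ} (hp : p ≠ 0) (x y : ℝ) :
    gagliardoKernel f p x y ≤ gagliardoKernel f p |x| |y| := by
  have hf_abs (z : ℝ) : f |z| = f z := by
    rcases abs_choice z with h | h <;> rw [h]; exact hf z
  unfold gagliardoKernel
  rw [hf_abs, hf_abs]
  rcases eq_or_ne |x| |y| with hxy | hxy
  · rw [← hf_abs x, ← hf_abs y, hxy, sub_self, abs_zero, zero_rpow hp, zero_div, zero_div]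
  · refine ENNReal.ofReal_le_ofReal (div_le_div_of_nonneg_left (by positivity) ?_ ?_)
    · exact pow_pos (abs_pos.2 (sub_ne_zero.2 hxy)) 2
    · exact pow_le_pow_left₀ (abs_nonneg _) (abs_abs_sub_abs_le_abs_sub x y) 2

theorem lintegral_gagliardoKernel_le_four_mul {f : ℝ → ℝ} (hf : f.Even) {p : ℝ} (hp : p ≠ 0) :
    ∫⁻ x, ∫⁻ y, gagliardoKernel f p x y ≤
      4 * ∫⁻ x in Ioi 0, ∫⁻ y in Ioi 0, gagliardoKernel f p x y := by
  calc ∫⁻ x, ∫⁻ y, gagliardoKernel f p x y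
      ≤ ∫⁻ x, ∫⁻ y, gagliardoKernel f p |x| |y| :=
        lintegral_mono fun x => lintegral_mono fun y => gagliardoKernel_le_abs hf hp x y
    _ = 4 * ∫⁻ x in Ioi 0, ∫⁻ y in Ioi 0, gagliardoKernel f p x y := by
        simp_rw [lintegral_comp_abs (gagliardoKernel f p |_|)]
        rw [lintegral_const_mul' _ _ ENNReal.ofNat_ne_top,
          lintegral_comp_abs fun x => ∫⁻ y in Ioi 0, gagliardoKernel f p x y, ← mul_assoc]
        norm_num

theorem sq_exp_neg_sub_exp_neg (s t : ℝ) :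
    (exp (-s) - exp (-t)) ^ 2 = exp (-s) * exp (-t) * (2 * sinh ((t - s) / 2)) ^ 2 := by
  rw [sinh_eq]
  have h1 : exp (-s) * exp (-t) = exp (-(s + t) / 2) ^ 2 := by
    rw [← exp_add, ← exp_nat_mul]; ring_nf
  rw [h1, ← mul_pow]
  congr 1
  rw [mul_div_cancel₀ _ two_ne_zero, mul_sub, ← exp_add, ← exp_add]
  ring_nf

theorem lintegral_Ioi_gagliardoKernel_eq (f : ℝ → ℝ) (p : ℝ) :
    ∫⁻ x in Ioi 0, ∫⁻ y in Ioi 0, gagliardoKernel f p x y =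
      ∫⁻ s, ∫⁻ t, ENNReal.ofReal
        (|f (exp (-s)) - f (exp (-t))| ^ p / (2 * sinh ((t - s) / 2)) ^ 2) := by
  simp_rw [lintegral_Ioi_zero_eq_lintegral_comp_exp_neg]
  refine lintegral_congr fun s => ?_
  rw [← lintegral_const_mul' _ _ ENNReal.ofReal_ne_top]
  refine lintegral_congr fun t => ?_
  rw [gagliardoKernel, ← ENNReal.ofReal_mul (exp_pos _).le, ← ENNReal.ofReal_mul (exp_pos _).le,
    sq_abs, sq_exp_neg_sub_exp_neg]
  congr 1
  field_simp

theorem mul_exp_half_le_two_sinh {x : ℝ} (hx : 0 ≤ x) : x * exp (x / 2) ≤ 2 * sinh x := by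
  have hsinh : x / 2 ≤ sinh (x / 2) := self_le_sinh_iff.2 (by positivity)
  have hcosh : exp (x / 2) ≤ 2 * cosh (x / 2) := by
    rw [cosh_eq]; linarith [exp_pos (-(x / 2))]
  calc x * exp (x / 2) ≤ x * (2 * cosh (x / 2)) := by gcongr
    _ ≤ 2 * sinh (x / 2) * (2 * cosh (x / 2)) := by gcongr; linarith
    _ = 2 * sinh (2 * (x / 2)) := by rw [sinh_two_mul]; ring
    _ = 2 * sinh x := by ring_nf

theorem rpow_mul_exp_div_two_sinh_sq_le {p d : ℝ} (hd : 0 ≤ d) :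
    d ^ p * exp (d / 4) / (2 * sinh (d / 2)) ^ 2 ≤ 4 * d ^ (p - 2) * exp (-(d / 4)) := by
  rcases hd.eq_or_lt with rfl | hd
  · simp [rpow_nonneg le_rfl]
  have hsinh : d / 2 * exp (d / 4) ≤ 2 * sinh (d / 2) := by
    convert mul_exp_half_le_two_sinh (x := d / 2) (by positivity) using 3; ring
  calc d ^ p * exp (d / 4) / (2 * sinh (d / 2)) ^ 2
      ≤ d ^ p * exp (d / 4) / (d / 2 * exp (d / 4)) ^ 2 := by gcongr
    _ = 4 * d ^ (p - 2) * exp (-(d / 4)) := by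
      rw [rpow_sub hd, rpow_two, exp_neg]
      field_simp
      ring

theorem fLogLog_even : fLogLog.Even := fun x => by
  simp only [fLogLog, abs_neg, neg_ne_zero]

noncomputable def truncLog (s : ℝ) : ℝ := if 1 < s then log s else 0

theorem fLogLog_exp_neg (s : ℝ) : fLogLog (exp (-s)) = truncLog s := by
  have hlt : exp (-s) < exp (-1) ↔ 1 < s := by rw [exp_lt_exp, neg_lt_neg_iff]
  simp only [fLogLog, truncLog, abs_of_pos (exp_pos _), ne_eq, exp_ne_zero, not_false_eq_true,
    true_and, hlt, one_div, ← exp_neg, neg_neg, log_exp]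

theorem truncLog_monotone : Monotone truncLog := by
  intro s t hst
  unfold truncLog
  split_ifs with hs ht ht
  · exact log_le_log (by linarith) hst
  · linarith
  · exact log_nonneg ht.le
  · rfl

theorem truncLog_sub_le_div {s t : ℝ} (hs : 1 < s) (hst : s ≤ t) :
    truncLog t - truncLog s ≤ (t - s) / s := by
  have hs0 : 0 < s := by linarith
  rw [truncLog, truncLog, if_pos hs, if_pos (hs.trans_le hst), ← log_div (by linarith) hs0.ne']
  calc log (t / s) ≤ t / s - 1 := log_le_sub_one_of_pos (div_pos (by linarith) hs0)
    _ = (t - s) / s := by field_simp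

theorem truncLog_sub_le {s t : ℝ} (hst : s ≤ t) : truncLog t - truncLog s ≤ t - s := by
  by_cases hs : 1 < s
  · calc truncLog t - truncLog s ≤ (t - s) / s := truncLog_sub_le_div hs hst
      _ ≤ t - s := div_le_self (by linarith) hs.le
  · rw [truncLog, truncLog, if_neg hs, sub_zero]
    split_ifs with ht
    · linarith [log_le_sub_one_of_pos (by linarith : 0 < t)]
    · linarith

noncomputable def logWeight (p s : ℝ) : ℝ := if 1 < s then s ^ (-p) else exp (s / 4)

noncomputable def decayKernel (p u : ℝ) : ℝ := 4 * |u| ^ (p - 2) * exp (-(|u| / 4))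

theorem logWeight_nonneg (p s : ℝ) : 0 ≤ logWeight p s := by
  unfold logWeight; split_ifs with hs
  · exact rpow_nonneg (by linarith) _
  · exact (exp_pos _).le

theorem measurable_logWeight (p : ℝ) : Measurable (logWeight p) :=
  Measurable.ite (measurableSet_lt measurable_const measurable_id) (by fun_prop) (by fun_prop)

theorem measurable_decayKernel (p : ℝ) : Measurable (decayKernel p) := by
  unfold decayKernel; fun_prop

theorem decayKernel_even (p : ℝ) : (decayKernel p).Even := fun u => by
  simp only [decayKernel, abs_neg]

theorem rpow_truncLog_sub_le {p s t : ℝ} (hp : 0 < p) (hst : s ≤ t) :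
    (truncLog t - truncLog s) ^ p ≤ logWeight p s * ((t - s) ^ p * exp ((t - s) / 4)) := by
  have hΔ : 0 ≤ truncLog t - truncLog s := sub_nonneg.2 (truncLog_monotone hst)
  have hd : 0 ≤ t - s := sub_nonneg.2 hst
  by_cases hs : 1 < s
  · have hs0 : 0 < s := by linarith
    calc (truncLog t - truncLog s) ^ p ≤ ((t - s) / s) ^ p :=
          rpow_le_rpow hΔ (truncLog_sub_le_div hs hst) hp.le
      _ = s ^ (-p) * (t - s) ^ p := by rw [div_rpow hd hs0.le, rpow_neg hs0.le]; ring
      _ ≤ s ^ (-p) * ((t - s) ^ p * exp ((t - s) / 4)) := by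
          gcongr; exact le_mul_of_one_le_right (by positivity) (one_le_exp (by positivity))
      _ = logWeight p s * ((t - s) ^ p * exp ((t - s) / 4)) := by rw [logWeight, if_pos hs]
  by_cases ht : 1 < t
  · calc (truncLog t - truncLog s) ^ p ≤ (t - s) ^ p :=
          rpow_le_rpow hΔ (truncLog_sub_le hst) hp.le
      _ ≤ (t - s) ^ p * exp (t / 4) := le_mul_of_one_le_right (by positivity)
          (one_le_exp (by positivity))
      _ = (t - s) ^ p * (exp (s / 4) * exp ((t - s) / 4)) := by rw [← exp_add]; ring_nf
      _ = logWeight p s * ((t - s) ^ p * exp ((t - s) / 4)) := by rw [logWeight, if_neg hs]; ring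
  · rw [truncLog, truncLog, if_neg hs, if_neg ht, sub_self, zero_rpow hp.ne']
    exact mul_nonneg (logWeight_nonneg p s) (by positivity)

theorem rpow_abs_truncLog_sub_div_le {p : ℝ} (hp : 0 < p) (s t : ℝ) :
    |truncLog s - truncLog t| ^ p / (2 * sinh ((t - s) / 2)) ^ 2 ≤
      (logWeight p s + logWeight p t) * decayKernel p (t - s) := by
  wlog hst : s ≤ t generalizing s t
  · have h := this t s (le_of_not_ge hst)
    rwa [abs_sub_comm, add_comm, ← neg_sub t s, neg_div, sinh_neg, mul_neg, neg_sq,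
      decayKernel_even p (t - s)] at h
  have hK : decayKernel p (t - s) = 4 * (t - s) ^ (p - 2) * exp (-((t - s) / 4)) := by
    rw [decayKernel, abs_of_nonneg (sub_nonneg.2 hst)]
  rw [abs_sub_comm, abs_of_nonneg (sub_nonneg.2 (truncLog_monotone hst))]
  calc (truncLog t - truncLog s) ^ p / (2 * sinh ((t - s) / 2)) ^ 2
      ≤ logWeight p s * ((t - s) ^ p * exp ((t - s) / 4)) / (2 * sinh ((t - s) / 2)) ^ 2 := by
        gcongr; exact rpow_truncLog_sub_le hp hst
    _ = logWeight p s * ((t - s) ^ p * exp ((t - s) / 4) / (2 * sinh ((t - s) / 2)) ^ 2) :=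
        mul_div_assoc _ _ _
    _ ≤ logWeight p s * decayKernel p (t - s) := by
        rw [hK]
        gcongr
        · exact logWeight_nonneg p s
        · exact rpow_mul_exp_div_two_sinh_sq_le (sub_nonneg.2 hst)
    _ ≤ (logWeight p s + logWeight p t) * decayKernel p (t - s) := by
        gcongr
        · rw [hK]; positivity
        · exact le_add_of_nonneg_right (logWeight_nonneg p t)

theorem lintegral_logWeight_lt_top {p : ℝ} (hp : 1 < p) :
    ∫⁻ s, ENNReal.ofReal (logWeight p s) < ⊤ := by
  refine Integrable.lintegral_lt_top ?_
  rw [← integrableOn_univ, ← Iic_union_Ioi (a := 1)]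
  refine IntegrableOn.union ?_ ?_
  · refine (integrableOn_exp_mul_Iic (by norm_num : (0 : ℝ) < 1 / 4) 1).congr_fun
      (fun s hs => ?_) measurableSet_Iic
    rw [logWeight, if_neg (not_lt.2 hs)]
    ring_nf
  · exact (integrableOn_Ioi_rpow_of_lt (a := -p) (by linarith) one_pos).congr_fun
      (fun s hs => by rw [logWeight, if_pos (mem_Ioi.1 hs)]) measurableSet_Ioi

theorem lintegral_decayKernel_lt_top {p : ℝ} (hp : 1 < p) :
    ∫⁻ u, ENNReal.ofReal (decayKernel p u) < ⊤ := by
  have h : IntegrableOn (fun d => 4 * (d ^ (p - 2) * exp (-(1 / 4) * d ^ (1 : ℝ)))) (Ioi 0) :=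
    (integrableOn_rpow_mul_exp_neg_mul_rpow (by linarith) one_pos (by norm_num)).const_mul 4
  have h' : ∫⁻ d in Ioi 0, ENNReal.ofReal (4 * d ^ (p - 2) * exp (-(d / 4))) < ⊤ := by
    refine (h.congr_fun (fun d _ => ?_) measurableSet_Ioi).lintegral_lt_top
    rw [rpow_one]; ring_nf
  change ∫⁻ u, (fun d => ENNReal.ofReal (4 * d ^ (p - 2) * exp (-(d / 4)))) |u| < ⊤
  rw [lintegral_comp_abs fun d => ENNReal.ofReal (4 * d ^ (p - 2) * exp (-(d / 4)))]
  exact ENNReal.mul_lt_top (by norm_num) h'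

/-- For `1 < p < ∞`, `fLogLog ∈ W^{1/p,p}(ℝ)`:
`∫_ℝ∫_ℝ |f(x)-f(y)|^p / |x-y|² dx dy < ∞`. -/
theorem stmt18 (p : ℝ) (hp : 1 < p) :
    (∫⁻ x : ℝ, ∫⁻ y : ℝ,
        ENNReal.ofReal (|fLogLog x - fLogLog y| ^ p / |x - y| ^ 2)) < ⊤ := by
  have hp0 : 0 < p := by linarith
  calc ∫⁻ x, ∫⁻ y, gagliardoKernel fLogLog p x y
      ≤ 4 * ∫⁻ x in Ioi 0, ∫⁻ y in Ioi 0, gagliardoKernel fLogLog p x y :=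
        lintegral_gagliardoKernel_le_four_mul fLogLog_even hp0.ne'
    _ = 4 * ∫⁻ s, ∫⁻ t, ENNReal.ofReal
          (|truncLog s - truncLog t| ^ p / (2 * sinh ((t - s) / 2)) ^ 2) := by
        simp_rw [lintegral_Ioi_gagliardoKernel_eq, fLogLog_exp_neg]
    _ ≤ 4 * ∫⁻ s, ∫⁻ t, (ENNReal.ofReal (logWeight p s) + ENNReal.ofReal (logWeight p t)) *
          ENNReal.ofReal (decayKernel p (t - s)) := by
        gcongr with s t
        rw [← ENNReal.ofReal_add (logWeight_nonneg p s) (logWeight_nonneg p t),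
          ← ENNReal.ofReal_mul (add_nonneg (logWeight_nonneg p s) (logWeight_nonneg p t))]
        exact ENNReal.ofReal_le_ofReal (rpow_abs_truncLog_sub_div_le hp0 s t)
    _ = 4 * (2 * (∫⁻ s, ENNReal.ofReal (logWeight p s)) *
          ∫⁻ u, ENNReal.ofReal (decayKernel p u)) := by
        rw [lintegral_lintegral_add_mul_comp_sub (measurable_logWeight p).ennreal_ofReal
          (measurable_decayKernel p).ennreal_ofReal
          fun u => congrArg ENNReal.ofReal (decayKernel_even p u)]
    _ < ⊤ := ENNReal.mul_lt_top (by norm_num) (ENNReal.mul_lt_top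
        (ENNReal.mul_lt_top (by norm_num) (lintegral_logWeight_lt_top hp))
        (lintegral_decayKernel_lt_top hp))
end
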